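/- arXiv:1411.5277 — 2 statements merged into one kernel-verified Lean document; each statement's English description precedes it below -/
import Mathlib

section
/- Let L, Λ : ℝ × ℝ → ℝ be smooth near (g₀, 0), suppose for all (g, ε) near (g₀, 0) that ∂L/∂g(g, ε) = 0 if and only if Λ(g, ε) = 0, suppose ∂L/∂g(g₀, 0) = 0, ∂²L/∂g²(g₀, 0) ≠ 0, ∂²L/∂g∂ε(g₀, 0) ≠ 0 and ∂Λ/∂ε(g₀, 0) ≠ 0. Then ∂Λ/∂g(g₀, 0) = ∂Λ/∂ε(g₀, 0) · (∂²L/∂g∂ε(g₀, 0))^{-1} · ∂²L/∂g²(g₀, 0) ≠ 0. -/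
open Filter Topology

theorem simple_turning_point_simple_eigenvalue (L Λ : ℝ → ℝ → ℝ) (g₀ : ℝ)
    (hL : ContDiffAt ℝ (⊤ : ℕ∞) (fun p : ℝ × ℝ => L p.1 p.2) (g₀, 0))
    (hΛ : ContDiffAt ℝ (⊤ : ℕ∞) (fun p : ℝ × ℝ => Λ p.1 p.2) (g₀, 0))
    (hiff : ∀ᶠ p : ℝ × ℝ in nhds (g₀, 0),
      (deriv (fun g => L g p.2) p.1 = 0 ↔ Λ p.1 p.2 = 0))
    (hLg : deriv (fun g => L g 0) g₀ = 0)
    (hLgg : deriv (fun g => deriv (fun g' => L g' 0) g) g₀ ≠ 0)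
    (hLgε : deriv (fun ε => deriv (fun g => L g ε) g₀) 0 ≠ 0)
    (hΛε : deriv (fun ε => Λ g₀ ε) 0 ≠ 0) :
    deriv (fun g => Λ g 0) g₀ =
      deriv (fun ε => Λ g₀ ε) 0 *
        (deriv (fun ε => deriv (fun g => L g ε) g₀) 0)⁻¹ *
        deriv (fun g => deriv (fun g' => L g' 0) g) g₀ ∧
    deriv (fun g => Λ g 0) g₀ ≠ 0 := by
  classical
  set p₀ : ℝ × ℝ := (g₀, 0) with hp₀
  set Lu : ℝ × ℝ → ℝ := fun p => L p.1 p.2 with hLudef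
  set Λu : ℝ × ℝ → ℝ := fun p => Λ p.1 p.2 with hΛudef
  -- decomposition of linear maps on ℝ × ℝ
  have hdec : ∀ (T : ℝ × ℝ →L[ℝ] ℝ) (x y : ℝ),
      T (x, y) = x * T (1, 0) + y * T (0, 1) := by
    intro T x y
    have h : (x, y) = x • ((1:ℝ), (0:ℝ)) + y • ((0:ℝ), (1:ℝ)) := by
      simp [Prod.ext_iff]
    rw [h, map_add, map_smul, map_smul, smul_eq_mul, smul_eq_mul]
  -- F = ∂L/∂g as a function on the plane
  set F : ℝ × ℝ → ℝ := fun p => fderiv ℝ Lu p (1, 0) with hFdef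
  have hFsmooth : ContDiffAt ℝ (⊤ : ℕ∞) F p₀ := by
    have h1 : ContDiffAt ℝ (⊤ : ℕ∞) (fderiv ℝ Lu) p₀ := hL.fderiv_right (by simp)
    exact (ContinuousLinearMap.apply ℝ ℝ (((1:ℝ), (0:ℝ)))).contDiff.contDiffAt.comp p₀ h1
  -- eventually, deriv in g equals F
  have hFe : ∀ᶠ p : ℝ × ℝ in 𝓝 p₀, deriv (fun g => L g p.2) p.1 = F p := by
    have hd : ∀ᶠ p : ℝ × ℝ in 𝓝 p₀, DifferentiableAt ℝ Lu p := by
      have hL1 : ContDiffAt ℝ 1 Lu p₀ := hL.of_le (by simp)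
      exact (hL1.eventually (by simp)).mono fun p hp => hp.differentiableAt one_ne_zero
    refine hd.mono fun p hp => ?_
    have hline : HasDerivAt (fun g : ℝ => ((g, p.2) : ℝ × ℝ)) ((1:ℝ), (0:ℝ)) p.1 :=
      HasDerivAt.prodMk (hasDerivAt_id p.1) (hasDerivAt_const p.1 p.2)
    have h' : HasDerivAt (fun g => L g p.2) (F p) p.1 :=
      by
        have h0 : HasFDerivAt Lu (fderiv ℝ Lu p) (p.1, p.2) := hp.hasFDerivAt
        exact h0.comp_hasDerivAt p.1 hline
    exact h'.deriv
  have hF0 : F p₀ = 0 := by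
    have h := hFe.self_of_nhds
    simpa [hp₀] using h.symm.trans hLg
  -- derivatives of F
  set DF : ℝ × ℝ →L[ℝ] ℝ := fderiv ℝ F p₀ with hDFdef
  have hFd : HasStrictFDerivAt F DF p₀ := hFsmooth.hasStrictFDerivAt (by simp)
  set a : ℝ := DF (1, 0) with hadef
  set b : ℝ := DF (0, 1) with hbdef
  have ha : deriv (fun g => deriv (fun g' => L g' 0) g) g₀ = a := by
    have h1 : HasDerivAt (fun g => F (g, 0)) a g₀ := by
      have hline : HasDerivAt (fun g : ℝ => ((g, (0:ℝ)) : ℝ × ℝ)) ((1:ℝ), (0:ℝ)) g₀ :=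
        HasDerivAt.prodMk (hasDerivAt_id g₀) (hasDerivAt_const g₀ 0)
      exact hFd.hasFDerivAt.comp_hasDerivAt g₀ hline
    have htend : Tendsto (fun g : ℝ => ((g, (0:ℝ)) : ℝ × ℝ)) (𝓝 g₀) (𝓝 p₀) := by
      have : Continuous (fun g : ℝ => ((g, (0:ℝ)) : ℝ × ℝ)) := continuous_id.prodMk continuous_const
      simpa [hp₀] using this.tendsto g₀
    have h2 : (fun g => deriv (fun g' => L g' 0) g) =ᶠ[𝓝 g₀] fun g => F (g, 0) := by
      exact (htend.eventually hFe).mono fun g hg => hg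
    rw [h2.deriv_eq, h1.deriv]
  have hb : deriv (fun ε => deriv (fun g => L g ε) g₀) 0 = b := by
    have h1 : HasDerivAt (fun ε => F (g₀, ε)) b 0 := by
      have hline : HasDerivAt (fun ε : ℝ => ((g₀, ε) : ℝ × ℝ)) ((0:ℝ), (1:ℝ)) 0 :=
        HasDerivAt.prodMk (hasDerivAt_const 0 g₀) (hasDerivAt_id 0)
      exact hFd.hasFDerivAt.comp_hasDerivAt 0 hline
    have htend : Tendsto (fun ε : ℝ => ((g₀, ε) : ℝ × ℝ)) (𝓝 0) (𝓝 p₀) := by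
      have : Continuous (fun ε : ℝ => ((g₀, ε) : ℝ × ℝ)) := continuous_const.prodMk continuous_id
      simpa [hp₀] using this.tendsto 0
    have h2 : (fun ε => deriv (fun g => L g ε) g₀) =ᶠ[𝓝 (0:ℝ)] fun ε => F (g₀, ε) := by
      exact (htend.eventually hFe).mono fun ε hε => hε
    rw [h2.deriv_eq, h1.deriv]
  have ha0 : a ≠ 0 := ha ▸ hLgg
  have hb0 : b ≠ 0 := hb ▸ hLgε
  -- derivatives of Λ
  set DΛ : ℝ × ℝ →L[ℝ] ℝ := fderiv ℝ Λu p₀ with hDΛdef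
  have hΛd : HasStrictFDerivAt Λu DΛ p₀ := hΛ.hasStrictFDerivAt (by simp)
  set Λg : ℝ := DΛ (1, 0) with hΛgdef
  set Λe : ℝ := DΛ (0, 1) with hΛedef
  have hΛg : deriv (fun g => Λ g 0) g₀ = Λg := by
    have hline : HasDerivAt (fun g : ℝ => ((g, (0:ℝ)) : ℝ × ℝ)) ((1:ℝ), (0:ℝ)) g₀ :=
      HasDerivAt.prodMk (hasDerivAt_id g₀) (hasDerivAt_const g₀ 0)
    exact (hΛd.hasFDerivAt.comp_hasDerivAt g₀ hline).deriv
  have hΛe : deriv (fun ε => Λ g₀ ε) 0 = Λe := by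
    have hline : HasDerivAt (fun ε : ℝ => ((g₀, ε) : ℝ × ℝ)) ((0:ℝ), (1:ℝ)) 0 :=
      HasDerivAt.prodMk (hasDerivAt_const 0 g₀) (hasDerivAt_id 0)
    exact (hΛd.hasFDerivAt.comp_hasDerivAt 0 hline).deriv
  have hΛe0 : Λe ≠ 0 := hΛe ▸ hΛε
  -- the map Φ and its inverse
  set Φ : ℝ × ℝ → ℝ × ℝ := fun p => (F p, p.2) with hΦdef
  set toL : ℝ × ℝ →L[ℝ] ℝ × ℝ := DF.prod (ContinuousLinearMap.snd ℝ ℝ ℝ) with htoLdef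
  set invL : ℝ × ℝ →L[ℝ] ℝ × ℝ :=
    (a⁻¹ • (ContinuousLinearMap.fst ℝ ℝ ℝ - b • ContinuousLinearMap.snd ℝ ℝ ℝ)).prod
      (ContinuousLinearMap.snd ℝ ℝ ℝ) with hinvLdef
  have htoL_apply : ∀ x y : ℝ, toL (x, y) = (x * a + y * b, y) := by
    intro x y
    simp [htoLdef, hdec DF x y, hadef, hbdef]
  have hinvL_apply : ∀ u v : ℝ, invL (u, v) = (a⁻¹ * (u - b * v), v) := by
    intro u v
    simp [hinvLdef, ContinuousLinearMap.smul_apply, mul_comm]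
  have h₁ : Function.LeftInverse invL toL := by
    rintro ⟨x, y⟩
    rw [htoL_apply, hinvL_apply]
    refine Prod.ext ?_ rfl
    field_simp
    ring
  have h₂ : Function.RightInverse invL toL := by
    rintro ⟨u, v⟩
    rw [hinvL_apply, htoL_apply]
    refine Prod.ext ?_ rfl
    field_simp
    ring
  set e : (ℝ × ℝ) ≃L[ℝ] (ℝ × ℝ) := ContinuousLinearEquiv.equivOfInverse toL invL h₁ h₂ with hedef
  have hΦ : HasStrictFDerivAt Φ (e : (ℝ × ℝ) →L[ℝ] (ℝ × ℝ)) p₀ := by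
    have h : HasStrictFDerivAt Φ toL p₀ :=
      hFd.prodMk (ContinuousLinearMap.snd ℝ ℝ ℝ).hasStrictFDerivAt
    exact h
  have hΦp₀ : Φ p₀ = ((0:ℝ), (0:ℝ)) := by
    simp [hΦdef, hF0, hp₀]
    exact hF0
  -- the implicit curve
  set ψ : ℝ → ℝ × ℝ := fun ε => hΦ.localInverse Φ e p₀ (0, ε) with hψdef
  have hψ0 : ψ 0 = p₀ := by
    show hΦ.localInverse Φ e p₀ ((0:ℝ), (0:ℝ)) = p₀
    rw [← hΦp₀]
    exact hΦ.localInverse_apply_image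
  have hj : HasDerivAt (fun ε : ℝ => (((0:ℝ), ε) : ℝ × ℝ)) ((0:ℝ), (1:ℝ)) 0 :=
    HasDerivAt.prodMk (hasDerivAt_const 0 0) (hasDerivAt_id 0)
  have hψ : HasDerivAt ψ (e.symm ((0:ℝ), (1:ℝ))) 0 := by
    have hinv : HasFDerivAt (hΦ.localInverse Φ e p₀)
        ((e.symm : (ℝ × ℝ) →L[ℝ] (ℝ × ℝ))) (((0:ℝ), (0:ℝ)) : ℝ × ℝ) := by
      rw [← hΦp₀]; exact hΦ.to_localInverse.hasFDerivAt
    exact hinv.comp_hasDerivAt 0 hj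
  have hesymm : e.symm ((0:ℝ), (1:ℝ)) = (-(a⁻¹ * b), (1:ℝ)) := by
    show invL ((0:ℝ), (1:ℝ)) = _
    rw [hinvL_apply]
    norm_num
  -- Λ vanishes along the curve
  have hψc : Tendsto ψ (𝓝 0) (𝓝 p₀) := by
    have := hψ.continuousAt.tendsto
    rwa [hψ0] at this
  have h1 : ∀ᶠ ε : ℝ in 𝓝 0, Φ (ψ ε) = ((0:ℝ), ε) := by
    have hre := hΦ.eventually_right_inverse
    rw [hΦp₀] at hre
    have hjc : Tendsto (fun ε : ℝ => (((0:ℝ), ε) : ℝ × ℝ)) (𝓝 0) (𝓝 ((0:ℝ), (0:ℝ))) := by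
      have : Continuous (fun ε : ℝ => (((0:ℝ), ε) : ℝ × ℝ)) := continuous_const.prodMk continuous_id
      simpa using this.tendsto 0
    exact hjc.eventually hre
  have hzero : (fun ε => Λ (ψ ε).1 (ψ ε).2) =ᶠ[𝓝 (0:ℝ)] (fun _ => (0:ℝ)) := by
    filter_upwards [h1, hψc.eventually hiff, hψc.eventually hFe] with ε he1 he2 he3
    have hF : F (ψ ε) = 0 := congrArg Prod.fst he1
    exact he2.mp (he3.trans hF)
  have hcomp : HasDerivAt (fun ε => Λ (ψ ε).1 (ψ ε).2) (DΛ (e.symm ((0:ℝ), (1:ℝ)))) 0 := by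
    have hΛf : HasFDerivAt Λu DΛ (ψ 0) := by rw [hψ0]; exact hΛd.hasFDerivAt
    exact hΛf.comp_hasDerivAt 0 hψ
  have hkey : DΛ (e.symm ((0:ℝ), (1:ℝ))) = 0 := by
    rw [← hcomp.deriv, hzero.deriv_eq]
    simp
  rw [hesymm, hdec DΛ] at hkey
  rw [← hΛgdef, ← hΛedef] at hkey
  -- hkey : -(a⁻¹ * b) * Λg + 1 * Λe = 0
  rw [hΛg, hΛe, ha, hb]
  clear_value a b Λg Λe
  have hle : Λe = a⁻¹ * b * Λg := by linarith
  have hΛg0 : Λg ≠ 0 := by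
    intro h
    rw [h, mul_zero] at hle
    exact hΛe0 hle
  refine ⟨?_, hΛg0⟩
  rw [hle]
  field_simp
end

section
/- Let L₁, …, L_N : ℝ^N → ℝ be C¹ near a point ĝ = (ĝ₁, …, ĝ_N), with Jacobian matrix J = (∂L_i/∂g_j) tridiagonal at every point near ĝ, nonzero off-diagonal entries, and det J(ĝ) = 0. Then the (N−1)×(N−1) Jacobian ∂(L₂,…,L_N)/∂(g₂,…,g_N) is invertible at ĝ, and there exist C¹ curves g̃_j(g₁) (j = 2, …, N) defined for g₁ near ĝ₁ with g̃_j(ĝ₁) = ĝ_j and L_j(g₁, g̃₂(g₁), …, g̃_N(g₁)) = L_j(ĝ) for all j = 2, …, N. -/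
/-!
Expanding along the first row, a tridiagonal determinant satisfies
`det J = J₀₀ det J' - J₀₁ J₁₀ det J''`, where `J'` and `J''` delete the first one, resp. two,
rows and columns. If `det J = det J' = 0`, the nonzero off-diagonal entries force `det J'' = 0`,
contradicting the induction hypothesis for `J'`. Hence the minor `∂(L₂, …, L_N)/∂(g₂, …, g_N)` is
invertible at `ĝ`, and the implicit function theorem with `g₁` as parameter yields the curves.
-/

open Matrix

/-- Partial derivative of `f : (Fin N → ℝ) → ℝ` with respect to coordinate `j` at `g`. -/
noncomputable def partialDeriv {N : ℕ} (f : (Fin N → ℝ) → ℝ) (j : Fin N) (g : Fin N → ℝ) : ℝ :=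
  deriv (fun t => f (Function.update g j t)) (g j)

open Topology
open scoped ContDiff

theorem partialDeriv_eq_fderiv {N : ℕ} {f : (Fin N → ℝ) → ℝ} {g : Fin N → ℝ}
    (hf : DifferentiableAt ℝ f g) (j : Fin N) :
    partialDeriv f j g = fderiv ℝ f g (Pi.single j 1) := by
  have hf' : HasFDerivAt f (fderiv ℝ f g) (Function.update g j (g j)) := by
    rw [Function.update_eq_self]
    exact hf.hasFDerivAt
  exact (hf'.comp_hasDerivAt (g j) (hasDerivAt_update g j (g j))).deriv

namespace Matrix

variable {R : Type*} {n : ℕ}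

def IsTridiagonal [Zero R] (A : Matrix (Fin n) (Fin n) R) : Prop :=
  ∀ i j : Fin n, i.val + 1 < j.val ∨ j.val + 1 < i.val → A i j = 0

theorem IsTridiagonal.submatrix_succ [Zero R] {A : Matrix (Fin (n + 1)) (Fin (n + 1)) R}
    (hA : A.IsTridiagonal) : (A.submatrix Fin.succ Fin.succ).IsTridiagonal :=
  fun i j h => hA i.succ j.succ (by simp only [Fin.val_succ]; omega)

variable [CommRing R]

theorem IsTridiagonal.det_submatrix_succ_succAbove_one
    {A : Matrix (Fin (n + 2)) (Fin (n + 2)) R} (hA : A.IsTridiagonal) :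
    (A.submatrix Fin.succ (Fin.succAbove 1)).det =
      A 1 0 * ((A.submatrix Fin.succ Fin.succ).submatrix Fin.succ Fin.succ).det := by
  rw [det_succ_column_zero, Fin.sum_univ_succ, Finset.sum_eq_zero]
  · simp [Function.comp_def]
  · intro i _
    simp [hA i.succ.succ 0 (Or.inr (by simp))]

theorem IsTridiagonal.det_eq {A : Matrix (Fin (n + 2)) (Fin (n + 2)) R} (hA : A.IsTridiagonal) :
    A.det = A 0 0 * (A.submatrix Fin.succ Fin.succ).det -
      A 0 1 * A 1 0 * ((A.submatrix Fin.succ Fin.succ).submatrix Fin.succ Fin.succ).det := by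
  rw [det_succ_row_zero, Fin.sum_univ_succ, Fin.sum_univ_succ, Finset.sum_eq_zero]
  · simp [hA.det_submatrix_succ_succAbove_one]
    ring
  · intro j _
    simp [hA 0 j.succ.succ (Or.inl (by simp))]

theorem IsTridiagonal.det_submatrix_succ_ne_zero [IsDomain R]
    {A : Matrix (Fin (n + 1)) (Fin (n + 1)) R} (hA : A.IsTridiagonal)
    (hoff : ∀ i j : Fin (n + 1), i.val + 1 = j.val ∨ j.val + 1 = i.val → A i j ≠ 0)
    (hdet : A.det = 0) : (A.submatrix Fin.succ Fin.succ).det ≠ 0 := by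
  induction n with
  | zero => simp
  | succ n ih =>
    intro hdet₁
    have hdet₂ := ih hA.submatrix_succ
      (fun i j h => hoff i.succ j.succ (by simp only [Fin.val_succ]; omega)) hdet₁
    have h01 := hoff 0 1 (Or.inl (by simp))
    have h10 := hoff 1 0 (Or.inr (by simp))
    rw [hA.det_eq, hdet₁] at hdet
    simp_all

end Matrix

theorem ContinuousLinearMap.isInvertible_of_det_ne_zero {𝕜 E : Type*}
    [NontriviallyNormedField 𝕜] [CompleteSpace 𝕜] [NormedAddCommGroup E] [NormedSpace 𝕜 E]
    [FiniteDimensional 𝕜 E] {f : E →L[𝕜] E} (hf : LinearMap.det (f : E →ₗ[𝕜] E) ≠ 0) :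
    f.IsInvertible := by
  have hbij : Function.Bijective f :=
    (Module.End.isUnit_iff _).1 ((LinearMap.isUnit_iff_isUnit_det _).2 hf.isUnit)
  exact ⟨(LinearEquiv.ofBijective (f : E →ₗ[𝕜] E) hbij).toContinuousLinearEquiv, rfl⟩

theorem Fin.cons_zero_single_eq_single_succ {M : Type*} [Zero M] {n : ℕ} (j : Fin n) (y : M) :
    (Fin.cons 0 (Pi.single j y) : Fin (n + 1) → M) = Pi.single j.succ y := by
  ext i
  induction i using Fin.cases with
  | zero => simp
  | succ i => simp [Pi.single_apply]

theorem ContDiffAt.exists_implicit_curve_of_det_ne_zero {𝕜 : Type*} [RCLike 𝕜] {n : ℕ}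
    {k : ℕ∞ω} {F : (Fin (n + 1) → 𝕜) → Fin n → 𝕜} {x : Fin (n + 1) → 𝕜}
    (hF : ContDiffAt 𝕜 k F x) (hk : k ≠ 0)
    (hdet : (of fun i j : Fin n => fderiv 𝕜 F x (Pi.single j.succ 1) i).det ≠ 0) :
    ∃ γ : 𝕜 → Fin n → 𝕜, ContDiffAt 𝕜 k γ (x 0) ∧ γ (x 0) = Fin.tail x ∧
      ∀ᶠ t in 𝓝 (x 0), F (Fin.cons t (γ t)) = F x := by
  set e := Fin.consEquivL 𝕜 (fun _ : Fin (n + 1) => 𝕜)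
  have he : ∀ p, e p = Fin.cons p.1 p.2 := fun _ => rfl
  have hex : e (x 0, Fin.tail x) = x := by rw [he, Fin.cons_self_tail]
  have hf : ContDiffAt 𝕜 k (F ∘ e) (x 0, Fin.tail x) := (hex ▸ hF).comp _ e.contDiff.contDiffAt
  have hinv : (fderiv 𝕜 (F ∘ e) (x 0, Fin.tail x) ∘L .inr 𝕜 𝕜 (Fin n → 𝕜)).IsInvertible := by
    refine ContinuousLinearMap.isInvertible_of_det_ne_zero ?_
    rw [← LinearMap.det_toMatrix']
    convert hdet using 2
    ext i j
    simp [LinearMap.toMatrix'_apply, e.comp_right_fderiv, hex, he,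
      Fin.cons_zero_single_eq_single_succ]
  refine ⟨hf.implicitFunction hk hinv, hf.contDiffAt_implicitFunction hk hinv,
    hf.implicitFunction_apply_self hk hinv, ?_⟩
  simpa [he, hex] using hf.eventually_apply_implicitFunction hk hinv

theorem tridiagonal_jacobian_curves (M : ℕ) (L : Fin (M + 1) → (Fin (M + 1) → ℝ) → ℝ)
    (ghat : Fin (M + 1) → ℝ)
    (hC1 : ∀ i, ContDiffAt ℝ 1 (L i) ghat)
    (htri : ∀ᶠ g in nhds ghat, ∀ i j : Fin (M + 1),
      (i.val + 1 < j.val ∨ j.val + 1 < i.val) → partialDeriv (L i) j g = 0)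
    (hoff : ∀ i j : Fin (M + 1), (i.val + 1 = j.val ∨ j.val + 1 = i.val) →
      partialDeriv (L i) j ghat ≠ 0)
    (hdet : (Matrix.of fun i j => partialDeriv (L i) j ghat).det = 0) :
    (Matrix.of fun i j : Fin M =>
        partialDeriv (L i.succ) j.succ ghat).det ≠ 0 ∧
    ∃ gt : Fin M → ℝ → ℝ,
      (∀ j, ContDiffAt ℝ 1 (gt j) (ghat 0)) ∧
      (∀ j, gt j (ghat 0) = ghat j.succ) ∧
      (∀ᶠ g₁ in nhds (ghat 0), ∀ j : Fin M,
        L j.succ (Fin.cons g₁ (fun k => gt k g₁)) = L j.succ ghat) := by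
  have hminor : (of fun i j : Fin M => partialDeriv (L i.succ) j.succ ghat).det ≠ 0 :=
    IsTridiagonal.det_submatrix_succ_ne_zero htri.self_of_nhds hoff hdet
  refine ⟨hminor, ?_⟩
  have hdiff : ∀ i, DifferentiableAt ℝ (L i) ghat := fun i => (hC1 i).differentiableAt one_ne_zero
  set F : (Fin (M + 1) → ℝ) → Fin M → ℝ := fun g j => L j.succ g
  have hF : ContDiffAt ℝ 1 F ghat := contDiffAt_pi.2 fun j => hC1 j.succ
  have hdetF : (of fun i j : Fin M => fderiv ℝ F ghat (Pi.single j.succ 1) i).det ≠ 0 := by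
    have hF' : fderiv ℝ F ghat = ContinuousLinearMap.pi fun j => fderiv ℝ (L j.succ) ghat :=
      fderiv_pi fun j => hdiff j.succ
    simpa [hF', partialDeriv_eq_fderiv (hdiff _)] using hminor
  obtain ⟨γ, hγ, hγ_base, hγ_level⟩ := hF.exists_implicit_curve_of_det_ne_zero one_ne_zero hdetF
  exact ⟨fun j t => γ t j, fun j => contDiffAt_pi.1 hγ j, fun j => congrFun hγ_base j,
    hγ_level.mono fun t ht j => congrFun ht j⟩
end
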